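/- Let λ > 0, let (t₀,r₀) ∈ ℝ × (0,∞), let ψ be of class C² on an open neighborhood of (t₀,r₀) contained in ℝ × (0,∞), assume 0 < ψ(t₀,r₀) < π, and set u(t,r) := ψ(t,r)/r. Then ψ satisfies the rescaled equation (λ² + 4 sin²(ψ)/r²)(∂_t²ψ − ∂_r²ψ) − (4/r)(λ² + 2 sin²(ψ)/r²)∂_rψ + (2 sin(2ψ)/r²)(λ² + (∂_tψ)² − (∂_rψ)² + 3 sin²(ψ)/r²) = 0 at (t₀,r₀) if and only if u satisfies the semilinear equation ∂_t²u − ∂_r²u − (6/r)∂_ru − f_SF(ru, r∂_ru, r∂_tu, r) − λ²·(λ² + 4sin²(ru)/r²)⁻¹·( f_WM(ru, r) − f_SF(ru, r∂_ru, r∂_tu, r) ) = 0 at (t₀,r₀). -/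

import Mathlib

open Real Set

/-- Partial derivative in time. -/
noncomputable def pt (ψ : ℝ → ℝ → ℝ) (t r : ℝ) : ℝ := deriv (fun s => ψ s r) t

/-- Partial derivative in space. -/
noncomputable def pr (ψ : ℝ → ℝ → ℝ) (t r : ℝ) : ℝ := deriv (fun ρ => ψ t ρ) r

/-- Second partial derivative in time. -/
noncomputable def ptt (ψ : ℝ → ℝ → ℝ) (t r : ℝ) : ℝ := deriv (fun s => pt ψ s r) t

/-- Second partial derivative in space. -/
noncomputable def prr (ψ : ℝ → ℝ → ℝ) (t r : ℝ) : ℝ := deriv (fun ρ => pr ψ t ρ) r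

/-- The strong field nonlinearity `f_SF`. -/
noncomputable def fSF (x y z r : ℝ) : ℝ :=
  -(1 / r) * Real.cot x * (z ^ 2 - y ^ 2) - (2 / r ^ 2) * (1 - x * Real.cot x) * y
    - ((3 / 2) * Real.sin (2 * x) - 2 * x - x ^ 2 * Real.cot x) / r ^ 3

/-- The wave maps nonlinearity `f_WM`. -/
noncomputable def fWM (x r : ℝ) : ℝ := (4 * x - 2 * Real.sin (2 * x)) / r ^ 3

/-- The rescaled co-rotational Skyrme equation with parameter `λ`, at the point `(t, r)`. -/
def RescaledSkyrmeEq (lam : ℝ) (ψ : ℝ → ℝ → ℝ) (t r : ℝ) : Prop :=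
  (lam ^ 2 + 4 * Real.sin (ψ t r) ^ 2 / r ^ 2) * (ptt ψ t r - prr ψ t r)
    - (4 / r) * (lam ^ 2 + 2 * Real.sin (ψ t r) ^ 2 / r ^ 2) * pr ψ t r
    + (2 * Real.sin (2 * ψ t r) / r ^ 2) *
        (lam ^ 2 + (pt ψ t r) ^ 2 - (pr ψ t r) ^ 2 + 3 * Real.sin (ψ t r) ^ 2 / r ^ 2) = 0

/-- The semilinear wave equation satisfied by `u = ψ/r`, at the point `(t, r)`. -/
def SemilinearEq (lam : ℝ) (u : ℝ → ℝ → ℝ) (t r : ℝ) : Prop :=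
  ptt u t r - prr u t r - (6 / r) * pr u t r
    - fSF (r * u t r) (r * pr u t r) (r * pt u t r) r
    - lam ^ 2 * (lam ^ 2 + 4 * Real.sin (r * u t r) ^ 2 / r ^ 2)⁻¹ *
        (fWM (r * u t r) r - fSF (r * u t r) (r * pr u t r) (r * pt u t r) r) = 0

/-- The key algebraic identity relating the two equations. -/
lemma key_ident (lam r ψ₀ a b A2 B2 : ℝ) (hr : r ≠ 0) (hs : Real.sin ψ₀ ≠ 0)
    (hA : lam ^ 2 + 4 * Real.sin ψ₀ ^ 2 / r ^ 2 ≠ 0) :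
    (lam ^ 2 + 4 * Real.sin ψ₀ ^ 2 / r ^ 2) * (A2 - B2)
      - (4 / r) * (lam ^ 2 + 2 * Real.sin ψ₀ ^ 2 / r ^ 2) * b
      + (2 * Real.sin (2 * ψ₀) / r ^ 2) *
          (lam ^ 2 + a ^ 2 - b ^ 2 + 3 * Real.sin ψ₀ ^ 2 / r ^ 2)
    = (A2 / r - (B2 / r - 2 * b / r ^ 2 + 2 * ψ₀ / r ^ 3)
        - (6 / r) * (b / r - ψ₀ / r ^ 2)
        - fSF (r * (ψ₀ / r)) (r * (b / r - ψ₀ / r ^ 2)) (r * (a / r)) r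
        - lam ^ 2 * (lam ^ 2 + 4 * Real.sin (r * (ψ₀ / r)) ^ 2 / r ^ 2)⁻¹ *
            (fWM (r * (ψ₀ / r)) r
              - fSF (r * (ψ₀ / r)) (r * (b / r - ψ₀ / r ^ 2)) (r * (a / r)) r))
        * (r * (lam ^ 2 + 4 * Real.sin ψ₀ ^ 2 / r ^ 2)) := by
  rw [mul_div_cancel₀ _ hr]
  rw [fSF, fWM, Real.cot_eq_cos_div_sin, Real.sin_two_mul]
  field_simp
  ring

theorem semilinear_reformulation (lam : ℝ) (hlam : 0 < lam)
    (t₀ r₀ : ℝ) (hr₀ : 0 < r₀)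
    (V : Set (ℝ × ℝ)) (hV : IsOpen V) (hmem : (t₀, r₀) ∈ V)
    (hVsub : V ⊆ {p : ℝ × ℝ | 0 < p.2})
    (ψ : ℝ → ℝ → ℝ) (hψ : ContDiffOn ℝ 2 (fun p : ℝ × ℝ => ψ p.1 p.2) V)
    (hval₁ : 0 < ψ t₀ r₀) (hval₂ : ψ t₀ r₀ < Real.pi) :
    RescaledSkyrmeEq lam ψ t₀ r₀ ↔
      SemilinearEq lam (fun t r => ψ t r / r) t₀ r₀ := by
  have hr0 : r₀ ≠ 0 := ne_of_gt hr₀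
  set F : ℝ × ℝ → ℝ := fun p => ψ p.1 p.2 with hFdef
  set g : ℝ × ℝ → (ℝ × ℝ) →L[ℝ] ℝ := fderiv ℝ F with hgdef
  have hFdiff : DifferentiableOn ℝ F V := hψ.differentiableOn (by norm_num)
  have hgC : ContDiffOn ℝ 1 g V := hψ.fderiv_of_isOpen hV (by norm_num)
  -- the slice ρ ↦ ψ t ρ has derivative g p (0,1) on V
  have hslice : ∀ p ∈ V, HasDerivAt (fun ρ => ψ p.1 ρ) (g p (0, 1)) p.2 := by
    intro p hp
    have hfd : HasFDerivAt F (g p) ((p.1, p.2) : ℝ × ℝ) := by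
      simpa using (hFdiff.differentiableAt (hV.mem_nhds hp)).hasFDerivAt
    have hline : HasDerivAt (fun ρ : ℝ => ((p.1, ρ) : ℝ × ℝ)) ((0 : ℝ), (1 : ℝ)) p.2 :=
      HasDerivAt.prodMk (hasDerivAt_const p.2 p.1) (hasDerivAt_id p.2)
    exact hfd.comp_hasDerivAt p.2 hline
  have hpr_eq : ∀ p ∈ V, pr ψ p.1 p.2 = g p (0, 1) := fun p hp => (hslice p hp).deriv
  -- eventually (t₀, ρ) ∈ V
  have hev : ∀ᶠ ρ in nhds r₀, ((t₀, ρ) : ℝ × ℝ) ∈ V := by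
    have hcont : Continuous (fun ρ : ℝ => ((t₀, ρ) : ℝ × ℝ)) := by continuity
    exact hcont.continuousAt.preimage_mem_nhds (hV.mem_nhds hmem)
  -- pt of u
  have hpt_u : ∀ s r : ℝ, pt (fun t r => ψ t r / r) s r = pt ψ s r / r := by
    intro s r; simp only [pt]; exact deriv_div_const r
  have hptt_u : ptt (fun t r => ψ t r / r) t₀ r₀ = ptt ψ t₀ r₀ / r₀ := by
    simp only [ptt]
    have : (fun s => pt (fun t r => ψ t r / r) s r₀) = fun s => pt ψ s r₀ / r₀ := by
      funext s; exact hpt_u s r₀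
    rw [this, deriv_div_const]
  -- pr of u on V
  have hpr_u : ∀ p ∈ V, pr (fun t r => ψ t r / r) p.1 p.2
      = pr ψ p.1 p.2 / p.2 - ψ p.1 p.2 / p.2 ^ 2 := by
    intro p hp
    have hp2 : (0 : ℝ) < p.2 := hVsub hp
    have h1 : HasDerivAt (fun ρ => ψ p.1 ρ) (pr ψ p.1 p.2) p.2 := by
      rw [hpr_eq p hp]; exact hslice p hp
    have h2 : HasDerivAt (fun ρ => ψ p.1 ρ / ρ)
        ((pr ψ p.1 p.2 * p.2 - ψ p.1 p.2 * 1) / p.2 ^ 2) p.2 :=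
      h1.div (hasDerivAt_id p.2) hp2.ne'
    have h3 : pr (fun t r => ψ t r / r) p.1 p.2
        = (pr ψ p.1 p.2 * p.2 - ψ p.1 p.2 * 1) / p.2 ^ 2 := h2.deriv
    rw [h3]
    field_simp
  have hpr_u₀ : pr (fun t r => ψ t r / r) t₀ r₀ = pr ψ t₀ r₀ / r₀ - ψ t₀ r₀ / r₀ ^ 2 :=
    hpr_u (t₀, r₀) hmem
  -- differentiability of ρ ↦ pr ψ t₀ ρ at r₀
  have hline' : DifferentiableAt ℝ (fun ρ : ℝ => ((t₀, ρ) : ℝ × ℝ)) r₀ :=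
    DifferentiableAt.prodMk (differentiableAt_const t₀) differentiableAt_id
  have hgd : DifferentiableAt ℝ g (t₀, r₀) :=
    ((hgC.differentiableOn one_ne_zero).differentiableAt (hV.mem_nhds hmem))
  have hGd : DifferentiableAt ℝ (fun ρ => g (t₀, ρ) ((0 : ℝ), (1 : ℝ))) r₀ := by
    have hcomp : DifferentiableAt ℝ (fun ρ => g (t₀, ρ)) r₀ := hgd.comp r₀ hline'
    exact ((ContinuousLinearMap.apply ℝ ℝ ((0 : ℝ), (1 : ℝ))).differentiableAt).comp r₀ hcomp
  have heq1 : (fun ρ => pr ψ t₀ ρ) =ᶠ[nhds r₀] (fun ρ => g (t₀, ρ) ((0 : ℝ), (1 : ℝ))) := by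
    filter_upwards [hev] with ρ hρ
    exact hpr_eq (t₀, ρ) hρ
  have hPd : DifferentiableAt ℝ (fun ρ => pr ψ t₀ ρ) r₀ :=
    hGd.congr_of_eventuallyEq heq1
  have hP : HasDerivAt (fun ρ => pr ψ t₀ ρ) (prr ψ t₀ r₀) r₀ := hPd.hasDerivAt
  -- prr of u
  have hprr_u : prr (fun t r => ψ t r / r) t₀ r₀
      = prr ψ t₀ r₀ / r₀ - 2 * pr ψ t₀ r₀ / r₀ ^ 2 + 2 * ψ t₀ r₀ / r₀ ^ 3 := by
    have hψ0 : HasDerivAt (fun ρ => ψ t₀ ρ) (pr ψ t₀ r₀) r₀ := by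
      rw [hpr_eq (t₀, r₀) hmem]; exact hslice (t₀, r₀) hmem
    have hN : HasDerivAt (fun ρ => pr ψ t₀ ρ / ρ - ψ t₀ ρ / ρ ^ 2)
        ((prr ψ t₀ r₀ * r₀ - pr ψ t₀ r₀ * 1) / r₀ ^ 2
          - (pr ψ t₀ r₀ * r₀ ^ 2 - ψ t₀ r₀ * (2 * r₀)) / (r₀ ^ 2) ^ 2) r₀ := by
      have h1 : HasDerivAt (fun ρ => pr ψ t₀ ρ / ρ)
          ((prr ψ t₀ r₀ * r₀ - pr ψ t₀ r₀ * 1) / r₀ ^ 2) r₀ :=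
        hP.div (hasDerivAt_id r₀) hr0
      have h2 : HasDerivAt (fun ρ : ℝ => ρ ^ 2) (2 * r₀) r₀ := by
        simpa using (hasDerivAt_pow 2 r₀)
      have h3 : HasDerivAt (fun ρ => ψ t₀ ρ / ρ ^ 2)
          ((pr ψ t₀ r₀ * r₀ ^ 2 - ψ t₀ r₀ * (2 * r₀)) / (r₀ ^ 2) ^ 2) r₀ :=
        hψ0.div h2 (pow_ne_zero 2 hr0)
      exact h1.sub h3
    have heq2 : (fun ρ => pr (fun t r => ψ t r / r) t₀ ρ)
        =ᶠ[nhds r₀] (fun ρ => pr ψ t₀ ρ / ρ - ψ t₀ ρ / ρ ^ 2) := by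
      filter_upwards [hev] with ρ hρ
      exact hpr_u (t₀, ρ) hρ
    have : prr (fun t r => ψ t r / r) t₀ r₀
        = deriv (fun ρ => pr ψ t₀ ρ / ρ - ψ t₀ ρ / ρ ^ 2) r₀ := heq2.deriv_eq
    rw [prr] at this ⊢
    rw [this, hN.deriv]
    field_simp
    ring
  -- now the algebra
  have hs : Real.sin (ψ t₀ r₀) ≠ 0 := (Real.sin_pos_of_pos_of_lt_pi hval₁ hval₂).ne'
  have hA : lam ^ 2 + 4 * Real.sin (ψ t₀ r₀) ^ 2 / r₀ ^ 2 ≠ 0 := by positivity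
  have key := key_ident lam r₀ (ψ t₀ r₀) (pt ψ t₀ r₀) (pr ψ t₀ r₀) (ptt ψ t₀ r₀)
    (prr ψ t₀ r₀) hr0 hs hA
  have hrA : r₀ * (lam ^ 2 + 4 * Real.sin (ψ t₀ r₀) ^ 2 / r₀ ^ 2) ≠ 0 := mul_ne_zero hr0 hA
  rw [RescaledSkyrmeEq, SemilinearEq]
  simp only [hptt_u, hprr_u, hpt_u, hpr_u₀]
  rw [key]
  constructor
  · intro h
    rcases mul_eq_zero.mp h with h1 | h1
    · exact h1
    · exact absurd h1 hrA
  · intro h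
    rw [h, zero_mul]
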